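/- Let R = C⁰_{b,D,<∞}(D) for D = [a,b] with a < b, and for x ∈ D let m_x = {f ∈ R : f(x) = 0}. Then the set T = {m_x : x ∈ D} is an open and dense subset of the maximal spectrum Specm(R) with the Zariski topology. -/

import Mathlib

open Set Filter Topology

/-- The ℝ-subalgebra of the product ring `W → ℝ` consisting of all bounded
functions with finitely many discontinuity points. -/
def pcAlg (W : Type*) [TopologicalSpace W] : Subalgebra ℝ (W → ℝ) where
  carrier := {f | (∃ C, ∀ x, |f x| ≤ C) ∧ {x | ¬ ContinuousAt f x}.Finite}
  add_mem' := by
    rintro f g ⟨⟨Cf, hCf⟩, hf⟩ ⟨⟨Cg, hCg⟩, hg⟩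
    refine ⟨⟨Cf + Cg, fun x => ?_⟩, (hf.union hg).subset fun x hx => ?_⟩
    · exact (abs_add_le _ _).trans (add_le_add (hCf x) (hCg x))
    · simp only [mem_union, mem_setOf_eq] at hx ⊢
      by_contra h
      push_neg at h
      exact hx (h.1.add h.2)
  mul_mem' := by
    rintro f g ⟨⟨Cf, hCf⟩, hf⟩ ⟨⟨Cg, hCg⟩, hg⟩
    refine ⟨⟨max Cf 0 * max Cg 0, fun x => ?_⟩, (hf.union hg).subset fun x hx => ?_⟩
    · rw [Pi.mul_apply, abs_mul]
      exact mul_le_mul ((hCf x).trans (le_max_left _ _)) ((hCg x).trans (le_max_left _ _))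
        (abs_nonneg _) (le_max_right _ _)
    · simp only [mem_union, mem_setOf_eq] at hx ⊢
      by_contra h
      push_neg at h
      exact hx (h.1.mul h.2)
  algebraMap_mem' := fun r => by
    refine ⟨⟨|r|, fun x => le_of_eq rfl⟩, Set.finite_empty.subset fun x hx => ?_⟩
    exact absurd continuousAt_const hx

/-- The ideal `m_x = {f : f x = 0}` of `R = C⁰_{b,D,<∞}(D)`. -/
def evalZeroIdeal (a b : ℝ) (x : ↥(Set.Icc a b)) : Ideal ↥(pcAlg ↥(Set.Icc a b)) where
  carrier := {f | f.1 x = 0}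
  zero_mem' := rfl
  add_mem' := by
    intro f g hf hg
    show f.1 x + g.1 x = 0
    rw [hf, hg, add_zero]
  smul_mem' := by
    intro c f hf
    show c.1 x * f.1 x = 0
    rw [hf, mul_zero]

/-!
The indicator `δₓ` of a point is a bounded function with one discontinuity, and it is idempotent.
So a maximal ideal `m` with `δₓ ∉ m` contains `1 - δₓ`, hence every `g` with `g x = 0`
(as `g = g (1 - δₓ)`), hence equals `mₓ`. Thus `T` is the union of the basic open sets `D(δₓ)`.
It is dense because a nonzero `f` is nonzero at some `x`, which puts `mₓ` in `D(f)`.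
-/

namespace Subalgebra

variable {k W : Type*} [Field k] (A : Subalgebra k (W → k))

def evalAlgHom (x : W) : A →ₐ[k] k :=
  (Pi.evalAlgHom k (fun _ => k) x).comp A.val

@[simp]
theorem evalAlgHom_apply (x : W) (f : A) : A.evalAlgHom x f = (f : W → k) x := rfl

theorem evalAlgHom_surjective (x : W) : Function.Surjective (A.evalAlgHom x) :=
  fun r => ⟨algebraMap k A r, by simp⟩

def pointMaximal (x : W) : MaximalSpectrum A :=
  ⟨RingHom.ker (A.evalAlgHom x), RingHom.ker_isMaximal_of_surjective _ (A.evalAlgHom_surjective x)⟩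

theorem mem_pointMaximal {x : W} {f : A} :
    f ∈ (A.pointMaximal x).asIdeal ↔ (f : W → k) x = 0 := Iff.rfl

theorem denseRange_pointMaximal : DenseRange A.pointMaximal := by
  rw [DenseRange, (PrimeSpectrum.isTopologicalBasis_basic_opens.induced
    MaximalSpectrum.toPrimeSpectrum).dense_iff]
  rintro _ ⟨_, ⟨f, rfl⟩, rfl⟩ ⟨m, hm⟩
  have hf : f ≠ 0 := fun h => hm (h ▸ m.asIdeal.zero_mem)
  obtain ⟨x, hx⟩ : ∃ x, (f : W → k) x ≠ 0 := by
    by_contra! h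
    exact hf (Subtype.ext (funext h))
  exact ⟨A.pointMaximal x, hx, x, rfl⟩

theorem eq_pointMaximal_of_indicator_notMem {x : W} {e : A}
    (he : (e : W → k) = ({x} : Set W).indicator 1) {m : MaximalSpectrum A}
    (hm : e ∉ m.asIdeal) : m = A.pointMaximal x := by
  have h_idem : e * (1 - e) = 0 := by
    ext y
    by_cases hy : y = x <;> simp [he, hy]
  have h_compl : 1 - e ∈ m.asIdeal :=
    (m.isMaximal.isPrime.mem_or_mem (h_idem ▸ m.asIdeal.zero_mem)).resolve_left hm
  have h_le : (A.pointMaximal x).asIdeal ≤ m.asIdeal := by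
    intro g hg
    have h_factor : g = g * (1 - e) := by
      ext y
      by_cases hy : y = x
      · subst hy; simp [he, (A.mem_pointMaximal).mp hg]
      · simp [he, hy]
    rw [h_factor]
    exact m.asIdeal.mul_mem_left g h_compl
  exact MaximalSpectrum.ext ((A.pointMaximal x).isMaximal.eq_of_le m.isMaximal.ne_top h_le).symm

theorem isOpen_range_pointMaximal (hA : ∀ x : W, ({x} : Set W).indicator 1 ∈ A) :
    IsOpen (Set.range A.pointMaximal) := by
  have h_range : Set.range A.pointMaximal = MaximalSpectrum.toPrimeSpectrum ⁻¹'
      ⋃ x, (PrimeSpectrum.basicOpen (⟨_, hA x⟩ : A) : Set (PrimeSpectrum A)) := by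
    ext m
    simp only [Set.mem_range, Set.mem_preimage, Set.mem_iUnion, SetLike.mem_coe,
      PrimeSpectrum.mem_basicOpen]
    constructor
    · rintro ⟨x, rfl⟩
      exact ⟨x, by simp [MaximalSpectrum.toPrimeSpectrum, mem_pointMaximal]⟩
    · rintro ⟨x, hx⟩
      exact ⟨x, (A.eq_pointMaximal_of_indicator_notMem rfl hx).symm⟩
  rw [h_range]
  exact (isOpen_iUnion fun x => PrimeSpectrum.isOpen_basicOpen).preimage
    MaximalSpectrum.toPrimeSpectrum_continuous

end Subalgebra

theorem indicator_one_mem_pcAlg {W : Type*} [TopologicalSpace W] {s : Set W}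
    (hs : (frontier s).Finite) : s.indicator 1 ∈ pcAlg W := by
  refine ⟨⟨1, fun y => ?_⟩, hs.subset fun y hy => ?_⟩
  · by_cases h : y ∈ s <;> simp [h]
  · by_contra h
    exact hy (continuousOn_const.continuousAt_indicator h)

theorem indicator_singleton_mem_pcAlg {W : Type*} [TopologicalSpace W] [T1Space W] (x : W) :
    ({x} : Set W).indicator 1 ∈ pcAlg W :=
  indicator_one_mem_pcAlg ((Set.finite_singleton x).subset
    (frontier_subset_closure.trans closure_singleton.subset))

theorem evalZeroIdeal_set_isOpen_and_dense_general (a b : ℝ) :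
    IsOpen {I : MaximalSpectrum ↥(pcAlg ↥(Set.Icc a b)) |
        ∃ x : ↥(Set.Icc a b), I.asIdeal = evalZeroIdeal a b x} ∧
      Dense {I : MaximalSpectrum ↥(pcAlg ↥(Set.Icc a b)) |
        ∃ x : ↥(Set.Icc a b), I.asIdeal = evalZeroIdeal a b x} := by
  have hT : {I : MaximalSpectrum ↥(pcAlg ↥(Set.Icc a b)) |
      ∃ x : ↥(Set.Icc a b), I.asIdeal = evalZeroIdeal a b x} =
      Set.range (pcAlg ↥(Set.Icc a b)).pointMaximal := by
    ext I
    simp only [Set.mem_ofPred_eq, Set.mem_range, MaximalSpectrum.ext_iff, eq_comm]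
    rfl
  rw [hT]
  exact ⟨Subalgebra.isOpen_range_pointMaximal _ indicator_singleton_mem_pcAlg,
    Subalgebra.denseRange_pointMaximal _⟩

/-- For `R = C⁰_{b,D,<∞}(D)`, the set `T = {m_x : x ∈ D}` is open and dense
in `Specm(R)` with the Zariski topology. -/
theorem evalZeroIdeal_set_isOpen_and_dense (a b : ℝ) (hab : a < b) :
    IsOpen {I : MaximalSpectrum ↥(pcAlg ↥(Set.Icc a b)) |
        ∃ x : ↥(Set.Icc a b), I.asIdeal = evalZeroIdeal a b x} ∧
      Dense {I : MaximalSpectrum ↥(pcAlg ↥(Set.Icc a b)) |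
        ∃ x : ↥(Set.Icc a b), I.asIdeal = evalZeroIdeal a b x} :=
  evalZeroIdeal_set_isOpen_and_dense_general a b
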